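/- arXiv:1602.06079 — 3 statements merged into one kernel-verified Lean document; each statement's English description precedes it below -/
import Mathlib

section
/- For random variables A, B, C, D, if A is conditionally independent of B given D, then I[A : C | B,D] ≥ I[A : C | D]. -/
/-! Expanding `I[A : (B, C) | D]` by the chain rule in both orders gives
`I[A : C | B, D] + I[A : B | D] = I[A : B | C, D] + I[A : C | D]`, so the claim follows from
`I[A : B | D] = 0` and `I[A : B | C, D] ≥ 0`. Nonnegativity is Gibbs' inequality: `I[X : Y | Z]`
is the relative entropy of the law of `(X, Y, Z)` with respect to `P(x, z) P(y, z) / P(z)`, which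
has the same total mass. -/

open scoped BigOperators

/-- Probability that random variable `X` takes value `x` under pmf `p` on `Ω`. -/
noncomputable def prob {Ω α : Type*} [Fintype Ω] [DecidableEq α]
    (p : Ω → ℝ) (X : Ω → α) (x : α) : ℝ :=
  ∑ ω, if X ω = x then p ω else 0

/-- Shannon entropy (base 2) of random variable `X` under pmf `p`. -/
noncomputable def entropy {Ω α : Type*} [Fintype Ω] [Fintype α] [DecidableEq α]
    (p : Ω → ℝ) (X : Ω → α) : ℝ :=
  -∑ x, prob p X x * Real.logb 2 (prob p X x)

/-- Mutual information I[X : Y]. -/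
noncomputable def mutualInfo {Ω α β : Type*} [Fintype Ω] [Fintype α] [Fintype β]
    [DecidableEq α] [DecidableEq β] (p : Ω → ℝ) (X : Ω → α) (Y : Ω → β) : ℝ :=
  entropy p X + entropy p Y - entropy p (fun ω => (X ω, Y ω))

/-- Conditional mutual information I[X : Y | Z] = H(X,Z) + H(Y,Z) - H(X,Y,Z) - H(Z). -/
noncomputable def condMutualInfo {Ω α β γ : Type*} [Fintype Ω] [Fintype α] [Fintype β] [Fintype γ]
    [DecidableEq α] [DecidableEq β] [DecidableEq γ]
    (p : Ω → ℝ) (X : Ω → α) (Y : Ω → β) (Z : Ω → γ) : ℝ :=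
  entropy p (fun ω => (X ω, Z ω)) + entropy p (fun ω => (Y ω, Z ω))
    - entropy p (fun ω => (X ω, Y ω, Z ω)) - entropy p Z

open Finset Real

section prob

variable {Ω α β γ : Type*} [Fintype Ω] [DecidableEq α] [DecidableEq β] [DecidableEq γ]
  (p : Ω → ℝ) (X : Ω → α)

lemma prob_nonneg (hp : ∀ ω, 0 ≤ p ω) (x : α) : 0 ≤ prob p X x :=
  sum_nonneg fun ω _ => by split_ifs <;> simp [hp ω]

variable [Fintype α]

lemma sum_prob : ∑ x, prob p X x = ∑ ω, p ω := by
  simp only [prob]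
  rw [sum_comm]
  simp

lemma prob_comp (f : α → β) (y : β) :
    prob p (fun ω => f (X ω)) y = ∑ x with f x = y, prob p X x := by
  simp only [prob]
  rw [sum_comm]
  simp

lemma prob_le_prob_comp (hp : ∀ ω, 0 ≤ p ω) (f : α → β) (x : α) :
    prob p X x ≤ prob p (fun ω => f (X ω)) (f x) := by
  rw [prob_comp p X f]
  exact single_le_sum (fun x' _ => prob_nonneg p X hp x') (by simp)

lemma prob_comp_pos (hp : ∀ ω, 0 ≤ p ω) (f : α → β) {x : α} (hx : 0 < prob p X x) :
    0 < prob p (fun ω => f (X ω)) (f x) :=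
  hx.trans_le (prob_le_prob_comp p X hp f x)

lemma prob_comp_of_injective {f : α → β} (hf : Function.Injective f) (x : α) :
    prob p (fun ω => f (X ω)) (f x) = prob p X x := by
  simp [prob_comp p X f, hf.eq_iff, sum_filter]

lemma sum_prob_pair [Fintype γ] (Z : Ω → γ) (z : γ) :
    ∑ x, prob p (fun ω => (X ω, Z ω)) (x, z) = prob p Z z := by
  rw [prob_comp p (fun ω => (X ω, Z ω)) Prod.snd, sum_filter, Fintype.sum_prod_type]
  simp

variable [Fintype β]

lemma entropy_comp (f : α → β) :
    entropy p (fun ω => f (X ω))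
      = -∑ x, prob p X x * logb 2 (prob p (fun ω => f (X ω)) (f x)) := by
  rw [entropy, ← sum_fiberwise univ f]
  congr 1
  refine sum_congr rfl fun y _ => ?_
  nth_rewrite 1 [prob_comp p X f y]
  rw [sum_mul]
  exact sum_congr rfl fun x hx => by rw [(mem_filter.1 hx).2]

lemma entropy_comp_of_injective {f : α → β} (hf : Function.Injective f) :
    entropy p (fun ω => f (X ω)) = entropy p X := by
  simp only [entropy_comp, prob_comp_of_injective p X hf]
  rfl

end prob

lemma mul_logb_div_le {b q r : ℝ} (hb : 1 < b) (hq : 0 ≤ q) (hr : 0 ≤ r) (hqr : 0 < q → 0 < r) :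
    q * logb b (r / q) ≤ (r - q) / log b := by
  rcases hq.eq_or_lt with rfl | hq_pos
  · simpa using div_nonneg hr (log_nonneg hb.le)
  have hlog : log (r / q) ≤ r / q - 1 := log_le_sub_one_of_pos (div_pos (hqr hq_pos) hq_pos)
  rw [logb, mul_div_assoc', div_le_div_iff_of_pos_right (log_pos hb)]
  calc q * log (r / q) ≤ q * (r / q - 1) := mul_le_mul_of_nonneg_left hlog hq
    _ = r - q := by field_simp

lemma sum_mul_logb_div_nonpos {ι : Type*} (s : Finset ι) {b : ℝ} (hb : 1 < b) {q r : ι → ℝ}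
    (hq : ∀ i ∈ s, 0 ≤ q i) (hr : ∀ i ∈ s, 0 ≤ r i) (hqr : ∀ i ∈ s, 0 < q i → 0 < r i)
    (hsum : ∑ i ∈ s, r i ≤ ∑ i ∈ s, q i) :
    ∑ i ∈ s, q i * logb b (r i / q i) ≤ 0 :=
  calc ∑ i ∈ s, q i * logb b (r i / q i) ≤ ∑ i ∈ s, (r i - q i) / log b :=
        sum_le_sum fun i hi => mul_logb_div_le hb (hq i hi) (hr i hi) (hqr i hi)
    _ = (∑ i ∈ s, r i - ∑ i ∈ s, q i) / log b := by rw [← sum_div, sum_sub_distrib]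
    _ ≤ 0 := div_nonpos_of_nonpos_of_nonneg (by linarith) (log_nonneg hb.le)

section condMutualInfo

variable {Ω α β γ : Type*} [Fintype Ω] [DecidableEq α] [DecidableEq β] [DecidableEq γ]
  (p : Ω → ℝ) (X : Ω → α) (Y : Ω → β) (Z : Ω → γ)

/-- The law of `(X, Y, Z)` with `X` and `Y` made conditionally independent given `Z`. -/
noncomputable def condIndepProb (w : α × β × γ) : ℝ :=
  prob p (fun ω => (X ω, Z ω)) (w.1, w.2.2) * prob p (fun ω => (Y ω, Z ω)) (w.2.1, w.2.2)
    / prob p Z w.2.2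

lemma condIndepProb_nonneg (hp : ∀ ω, 0 ≤ p ω) (w : α × β × γ) : 0 ≤ condIndepProb p X Y Z w :=
  div_nonneg (mul_nonneg (prob_nonneg p _ hp _) (prob_nonneg p _ hp _)) (prob_nonneg p _ hp _)

variable [Fintype α] [Fintype β] [Fintype γ]

lemma condIndepProb_pos (hp : ∀ ω, 0 ≤ p ω) {w : α × β × γ}
    (hw : 0 < prob p (fun ω => (X ω, Y ω, Z ω)) w) : 0 < condIndepProb p X Y Z w :=
  div_pos (mul_pos (prob_comp_pos p _ hp (fun w => (w.1, w.2.2)) hw)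
    (prob_comp_pos p _ hp (fun w => (w.2.1, w.2.2)) hw)) (prob_comp_pos p _ hp (fun w => w.2.2) hw)

lemma sum_condIndepProb : ∑ w, condIndepProb p X Y Z w = ∑ ω, p ω :=
  calc ∑ w, condIndepProb p X Y Z w
      = ∑ z, (∑ x, prob p (fun ω => (X ω, Z ω)) (x, z))
          * (∑ y, prob p (fun ω => (Y ω, Z ω)) (y, z)) / prob p Z z := by
        simp only [condIndepProb, Fintype.sum_prod_type, sum_mul_sum, sum_div]
        exact sum_comm_cycle
    _ = ∑ z, prob p Z z := by simp only [sum_prob_pair, mul_self_div_self]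
    _ = ∑ ω, p ω := sum_prob p Z

lemma condMutualInfo_eq_neg_sum_mul_logb (hp : ∀ ω, 0 ≤ p ω) :
    condMutualInfo p X Y Z = -∑ w, prob p (fun ω => (X ω, Y ω, Z ω)) w
      * logb 2 (condIndepProb p X Y Z w / prob p (fun ω => (X ω, Y ω, Z ω)) w) := by
  set W := fun ω => (X ω, Y ω, Z ω)
  have hXZ : entropy p (fun ω => (X ω, Z ω))
      = -∑ w, prob p W w * logb 2 (prob p (fun ω => (X ω, Z ω)) (w.1, w.2.2)) :=
    entropy_comp p W (fun w => (w.1, w.2.2))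
  have hYZ : entropy p (fun ω => (Y ω, Z ω))
      = -∑ w, prob p W w * logb 2 (prob p (fun ω => (Y ω, Z ω)) (w.2.1, w.2.2)) :=
    entropy_comp p W (fun w => (w.2.1, w.2.2))
  have hZ : entropy p Z = -∑ w, prob p W w * logb 2 (prob p Z w.2.2) :=
    entropy_comp p W (fun w => w.2.2)
  have hterm : ∀ w, prob p W w * logb 2 (condIndepProb p X Y Z w / prob p W w)
      = prob p W w * logb 2 (prob p (fun ω => (X ω, Z ω)) (w.1, w.2.2))
        + prob p W w * logb 2 (prob p (fun ω => (Y ω, Z ω)) (w.2.1, w.2.2))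
        - prob p W w * logb 2 (prob p Z w.2.2) - prob p W w * logb 2 (prob p W w) := by
    intro w
    rcases (prob_nonneg p W hp w).eq_or_lt with hw | hw
    · simp [← hw]
    have hXZ_ne := (prob_comp_pos p W hp (fun w => (w.1, w.2.2)) hw).ne'
    have hYZ_ne := (prob_comp_pos p W hp (fun w => (w.2.1, w.2.2)) hw).ne'
    have hZ_ne := (prob_comp_pos p W hp (fun w => w.2.2) hw).ne'
    rw [condIndepProb, logb_div (div_ne_zero (mul_ne_zero hXZ_ne hYZ_ne) hZ_ne) hw.ne',
      logb_div (mul_ne_zero hXZ_ne hYZ_ne) hZ_ne, logb_mul hXZ_ne hYZ_ne]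
    ring
  rw [condMutualInfo, hXZ, hYZ, hZ, entropy]
  simp only [hterm, sum_add_distrib, sum_sub_distrib]
  ring

lemma condMutualInfo_nonneg (hp : ∀ ω, 0 ≤ p ω) : 0 ≤ condMutualInfo p X Y Z := by
  rw [condMutualInfo_eq_neg_sum_mul_logb p X Y Z hp, neg_nonneg]
  exact sum_mul_logb_div_nonpos univ one_lt_two (fun w _ => prob_nonneg p _ hp w)
    (fun w _ => condIndepProb_nonneg p X Y Z hp w) (fun w _ => condIndepProb_pos p X Y Z hp)
    (by rw [sum_condIndepProb, sum_prob])

end condMutualInfo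

lemma condMutualInfo_chain_comm {Ω α β γ δ : Type*} [Fintype Ω] [Fintype α] [Fintype β]
    [Fintype γ] [Fintype δ] [DecidableEq α] [DecidableEq β] [DecidableEq γ] [DecidableEq δ]
    (p : Ω → ℝ) (A : Ω → α) (B : Ω → β) (C : Ω → γ) (D : Ω → δ) :
    condMutualInfo p A C (fun ω => (B ω, D ω)) + condMutualInfo p A B D
      = condMutualInfo p A B (fun ω => (C ω, D ω)) + condMutualInfo p A C D := by
  have hBC : entropy p (fun ω => (C ω, B ω, D ω)) = entropy p (fun ω => (B ω, C ω, D ω)) :=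
    entropy_comp_of_injective p (fun ω => (B ω, C ω, D ω)) (f := fun w => (w.2.1, w.1, w.2.2))
      fun _ _ h => by simp_all [Prod.ext_iff]
  have hABC : entropy p (fun ω => (A ω, C ω, B ω, D ω))
      = entropy p (fun ω => (A ω, B ω, C ω, D ω)) :=
    entropy_comp_of_injective p (fun ω => (A ω, B ω, C ω, D ω))
      (f := fun w => (w.1, w.2.2.1, w.2.1, w.2.2.2))
      fun _ _ h => by simp_all [Prod.ext_iff]
  simp only [condMutualInfo, hBC, hABC]
  ring

theorem condMutualInfo_cond_ge_general {Ω α β γ δ : Type*} [Fintype Ω] [Fintype α] [Fintype β]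
    [Fintype γ] [Fintype δ] [DecidableEq α] [DecidableEq β] [DecidableEq γ] [DecidableEq δ]
    (p : Ω → ℝ) (hp : ∀ ω, 0 ≤ p ω)
    (A : Ω → α) (B : Ω → β) (C : Ω → γ) (D : Ω → δ)
    (hind : condMutualInfo p A B D = 0) :
    condMutualInfo p A C (fun ω => (B ω, D ω)) ≥ condMutualInfo p A C D := by
  have hchain := condMutualInfo_chain_comm p A B C D
  have hnonneg := condMutualInfo_nonneg p A B (fun ω => (C ω, D ω)) hp
  linarith

/-- If A is conditionally independent of B given D, then I[A : C | B,D] ≥ I[A : C | D]. -/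
theorem condMutualInfo_cond_ge {Ω α β γ δ : Type*} [Fintype Ω] [Fintype α] [Fintype β]
    [Fintype γ] [Fintype δ] [DecidableEq α] [DecidableEq β] [DecidableEq γ] [DecidableEq δ]
    (p : Ω → ℝ) (hp : ∀ ω, 0 ≤ p ω) (hp1 : ∑ ω, p ω = 1)
    (A : Ω → α) (B : Ω → β) (C : Ω → γ) (D : Ω → δ)
    (hind : condMutualInfo p A B D = 0) :
    condMutualInfo p A C (fun ω => (B ω, D ω)) ≥ condMutualInfo p A C D :=
  condMutualInfo_cond_ge_general p hp A B C D hind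
end

section
/- Let X be a random variable uniform on {x_1, x_2} and let Π be a randomized map (Markov kernel) applied to X. Then I[X : Π(X)] ≥ h^2(Π(x_1), Π(x_2)), where Π(x_i) denotes the output distribution on input x_i. -/
open scoped BigOperators

open scoped BigOperators

/-- Hellinger distance between two nonnegative functions on a finite sample space. -/
noncomputable def hellinger {Ω : Type*} [Fintype Ω] (P Q : Ω → ℝ) : ℝ :=
  Real.sqrt ((1/2) * ∑ ω, (Real.sqrt (P ω) - Real.sqrt (Q ω))^2)

/-- `P` is a probability mass function on the finite type `Ω`. -/
def IsPMF {Ω : Type*} [Fintype Ω] (P : Ω → ℝ) : Prop :=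
  (∀ ω, 0 ≤ P ω) ∧ ∑ ω, P ω = 1

/-!
The mutual information is the Jensen–Shannon divergence of `Π(x₁)` and `Π(x₂)`: in nats
it is `∑ ω, negMulLog m - (negMulLog p + negMulLog q) / 2` with `m = (p + q) / 2`. Writing
`p = s a` and `q = s (1 - a)`, the summand equals `s (log 2 - H(a)) / 2`, while
`(√p - √q)² / 2 = s (1 - 2 √(a (1 - a))) / 2`. So everything reduces to the bound
`H(a) ≤ 2 log 2 √(a (1 - a))` on the binary entropy (in nats).
That bound is tight at `a = 0, 1/2, 1` and is proved by splitting at `a (1 - a) = 1/5`.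
Away from `1/2`, each term obeys `-a log a ≤ √a (1 - a)` (with `a = e^{-2t}` this is
`t ≤ sinh t`), and `√a + √(1 - a) ≤ 2 log 2`. Near `1/2`, the binary Pinsker inequality
`H(a) ≤ log 2 - (1 - 2a)² / 2` and `√(1 - x) ≥ 1 - 7x/10` suffice.
-/

open Real

namespace Real

lemma two_mul_le_log_one_add_sub_log_one_sub {y : ℝ} (h0 : 0 ≤ y) (h1 : y < 1) :
    2 * y ≤ log (1 + y) - log (1 - y) := by
  have hsum := hasSum_log_sub_log_of_abs_lt_one (abs_lt.mpr ⟨by linarith, h1⟩)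
  simpa using le_hasSum hsum 0 fun k _ => by positivity

lemma binEntropy_le_log_two_sub_sq_of_le_half {a : ℝ} (h0 : 0 ≤ a) (h1 : a ≤ 2⁻¹) :
    binEntropy a ≤ log 2 - (1 - 2 * a) ^ 2 / 2 := by
  have hanti :
      AntitoneOn (fun x => log 2 - (1 - 2 * x) ^ 2 / 2 - binEntropy x) (Set.Icc 0 2⁻¹) := by
    refine antitoneOn_of_hasDerivWithinAt_nonpos (convex_Icc _ _) (by fun_prop)
      (f' := fun x => 2 * (1 - 2 * x) - (log (1 - x) - log x)) (fun x hx => ?_) (fun x hx => ?_)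
    all_goals rw [interior_Icc] at hx; obtain ⟨hx0, hx1⟩ := hx
    · have hpoly : HasDerivAt (fun x : ℝ => (1 - 2 * x) ^ 2 / 2) (-(2 * (1 - 2 * x))) x :=
        ((((hasDerivAt_id' x).const_mul 2).const_sub 1).fun_pow 2).div_const 2
          |>.congr_deriv (by norm_num; ring)
      exact (((hasDerivAt_const x (log 2)).sub hpoly).sub
        (hasDerivAt_binEntropy hx0.ne' (by linarith))).hasDerivWithinAt.congr_deriv (by ring)
    · have key :=
        two_mul_le_log_one_add_sub_log_one_sub (y := 1 - 2 * x) (by linarith) (by linarith)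
      rw [show 1 + (1 - 2 * x) = 2 * (1 - x) by ring, show 1 - (1 - 2 * x) = 2 * x by ring,
        log_mul two_ne_zero (by linarith), log_mul two_ne_zero hx0.ne'] at key
      linarith
  have := hanti ⟨h0, h1⟩ ⟨by norm_num, le_rfl⟩ h1
  simp only [ne_eq, OfNat.ofNat_ne_zero, not_false_eq_true, mul_inv_cancel₀, sub_self, zero_pow,
    zero_div, sub_zero, binEntropy_two_inv, sub_nonneg] at this
  linarith

lemma binEntropy_le_log_two_sub_sq {a : ℝ} (h0 : 0 ≤ a) (h1 : a ≤ 1) :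
    binEntropy a ≤ log 2 - (1 - 2 * a) ^ 2 / 2 := by
  rcases le_total a 2⁻¹ with ha | ha
  · exact binEntropy_le_log_two_sub_sq_of_le_half h0 ha
  · have := binEntropy_le_log_two_sub_sq_of_le_half (a := 1 - a) (by linarith) (by linarith)
    rw [binEntropy_one_sub] at this
    linarith

lemma negMulLog_le_sqrt_mul_one_sub {a : ℝ} (h0 : 0 ≤ a) (h1 : a ≤ 1) :
    negMulLog a ≤ √a * (1 - a) := by
  rcases h0.eq_or_lt with rfl | ha
  · simp
  set u := √a
  have hu0 : 0 < u := sqrt_pos.mpr ha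
  have ht : 0 ≤ -log u := neg_nonneg.mpr (log_nonpos hu0.le (sqrt_le_one.mpr h1))
  have hsinh := self_le_sinh_iff.mpr ht
  rw [sinh_eq, neg_neg, exp_log hu0, exp_neg, exp_log hu0] at hsinh
  have ha' : a = u ^ 2 := (sq_sqrt h0).symm
  rw [ha', negMulLog, log_pow]
  have : u ^ 2 * (-log u) ≤ u ^ 2 * ((u⁻¹ - u) / 2) :=
    mul_le_mul_of_nonneg_left hsinh (by positivity)
  field_simp at this ⊢
  push_cast
  nlinarith

lemma binEntropy_le_sqrt_mul_one_sub_mul {a : ℝ} (h0 : 0 ≤ a) (h1 : a ≤ 1) :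
    binEntropy a ≤ √(a * (1 - a)) * (√a + √(1 - a)) := by
  have hA := negMulLog_le_sqrt_mul_one_sub h0 h1
  have hB := negMulLog_le_sqrt_mul_one_sub (a := 1 - a) (by linarith) (by linarith)
  have hexpand :
      √(a * (1 - a)) * (√a + √(1 - a)) = √a * (1 - a) + √(1 - a) * (1 - (1 - a)) := by
    rw [sqrt_mul h0]
    linear_combination √(1 - a) * sq_sqrt h0 + √a * sq_sqrt (sub_nonneg.mpr h1)
  rw [binEntropy_eq_negMulLog_add_negMulLog_one_sub, hexpand]
  linarith

lemma binEntropy_le_two_mul_log_two_mul_sqrt {a : ℝ} (h0 : 0 ≤ a) (h1 : a ≤ 1) :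
    binEntropy a ≤ 2 * log 2 * √(a * (1 - a)) := by
  have hl2 := log_two_gt_d9
  have hl2' := log_two_lt_d9
  have hs0 := sqrt_nonneg (a * (1 - a))
  by_cases hsmall : a * (1 - a) ≤ 1 / 5
  · have hs : √(a * (1 - a)) ≤ 0.448 :=
      (sqrt_le_left (by norm_num)).mpr (by norm_num; linarith)
    have hsum_sq : (√a + √(1 - a)) ^ 2 = 1 + 2 * √(a * (1 - a)) := by
      rw [sqrt_mul h0]; nlinarith [sq_sqrt h0, sq_sqrt (sub_nonneg.mpr h1)]
    have hsum : √a + √(1 - a) ≤ 2 * log 2 :=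
      (pow_le_pow_iff_left₀ (by positivity) (by positivity) two_ne_zero).mp (by nlinarith)
    calc binEntropy a ≤ √(a * (1 - a)) * (√a + √(1 - a)) :=
          binEntropy_le_sqrt_mul_one_sub_mul h0 h1
      _ ≤ 2 * log 2 * √(a * (1 - a)) := by nlinarith
  · set x := (1 - 2 * a) ^ 2 with hx
    have hx0 : 0 ≤ x := sq_nonneg _
    have hx1 : x < 1 / 5 := by rw [hx]; nlinarith
    have hsqrt : 2 * √(a * (1 - a)) = √(1 - x) := by
      rw [show 1 - x = 2 ^ 2 * (a * (1 - a)) by rw [hx]; ring,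
        sqrt_mul (by norm_num : (0 : ℝ) ≤ 2 ^ 2), sqrt_sq (by norm_num : (0 : ℝ) ≤ 2)]
    have hroot : 1 - 7 / 10 * x ≤ √(1 - x) := le_sqrt_of_sq_le (by nlinarith)
    calc binEntropy a ≤ log 2 - x / 2 := binEntropy_le_log_two_sub_sq h0 h1
      _ ≤ log 2 * √(1 - x) := by nlinarith
      _ = 2 * log 2 * √(a * (1 - a)) := by rw [← hsqrt]; ring

lemma negMulLog_mul_add_negMulLog_mul_one_sub (s a : ℝ) :
    negMulLog (s * a) + negMulLog (s * (1 - a)) = negMulLog s + s * binEntropy a := by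
  rw [negMulLog_mul, negMulLog_mul, binEntropy_eq_negMulLog_add_negMulLog_one_sub]
  ring

lemma negMulLog_div_two (x : ℝ) : negMulLog (x / 2) = negMulLog x / 2 + x * (log 2 / 2) := by
  rw [div_eq_mul_inv, negMulLog_mul]
  simp only [negMulLog, log_inv]
  ring

lemma log_two_mul_sq_sqrt_sub_sqrt_le {p q : ℝ} (hp : 0 ≤ p) (hq : 0 ≤ q) :
    log 2 * ((√p - √q) ^ 2 / 2) ≤
      negMulLog ((p + q) / 2) - (negMulLog p + negMulLog q) / 2 := by
  rcases (add_nonneg hp hq).eq_or_lt with hs | hs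
  · obtain ⟨rfl, rfl⟩ : p = 0 ∧ q = 0 := ⟨by linarith, by linarith⟩
    simp
  set a := p / (p + q)
  have hpa : (p + q) * a = p := mul_div_cancel₀ p hs.ne'
  have hqa : (p + q) * (1 - a) = q := by rw [mul_one_sub, hpa]; ring
  have hentropy := negMulLog_mul_add_negMulLog_mul_one_sub (p + q) a
  rw [hpa, hqa] at hentropy
  have hmid := negMulLog_div_two (p + q)
  have hgeo : (p + q) * √(a * (1 - a)) = √p * √q :=
    calc (p + q) * √(a * (1 - a)) = √((p + q) ^ 2 * (a * (1 - a))) := by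
          rw [sqrt_mul (sq_nonneg _), sqrt_sq hs.le]
      _ = √((p + q) * a * ((p + q) * (1 - a))) := by ring_nf
      _ = √p * √q := by rw [hpa, hqa, sqrt_mul hp]
  have hsq : (√p - √q) ^ 2 = (p + q) - 2 * ((p + q) * √(a * (1 - a))) := by
    rw [hgeo]
    linear_combination sq_sqrt hp + sq_sqrt hq
  have hbound := mul_le_mul_of_nonneg_left (binEntropy_le_two_mul_log_two_mul_sqrt (a := a)
    (by positivity) (div_le_one_of_le₀ (by linarith) hs.le)) hs.le
  rw [hmid, hsq]
  nlinarith

end Real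

section InformationTheory

variable {α β : Type*} [Fintype α] [Fintype β]

lemma entropy_eq_sum_negMulLog {Ω : Type*} [Fintype Ω] [DecidableEq α]
    (p : Ω → ℝ) (X : Ω → α) :
    entropy p X = (∑ x, negMulLog (prob p X x)) / log 2 := by
  rw [entropy, Finset.sum_div, ← Finset.sum_neg_distrib]
  congr 1 with x
  rw [negMulLog, logb]
  ring

lemma prob_fst [DecidableEq α] (p : α × β → ℝ) (a : α) :
    prob p Prod.fst a = ∑ b, p (a, b) := by
  rw [prob, Fintype.sum_prod_type, Finset.sum_eq_single a] <;> simp_all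

lemma prob_snd [DecidableEq β] (p : α × β → ℝ) (b : β) :
    prob p Prod.snd b = ∑ a, p (a, b) := by
  rw [prob, Fintype.sum_prod_type_right, Finset.sum_eq_single b] <;> simp_all

lemma prob_fst_snd [DecidableEq α] [DecidableEq β] (p : α × β → ℝ) (x : α × β) :
    prob p (fun y => (y.1, y.2)) x = p x := by
  simp [prob]

lemma mutualInfo_fst_snd_mul_log_two [DecidableEq α] [DecidableEq β] (p : α × β → ℝ) :
    mutualInfo p Prod.fst Prod.snd * log 2 =
      ∑ a, negMulLog (∑ b, p (a, b)) + ∑ b, negMulLog (∑ a, p (a, b))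
        - ∑ x, negMulLog (p x) := by
  have hlog : log 2 ≠ 0 := (log_pos one_lt_two).ne'
  simp only [mutualInfo, entropy_eq_sum_negMulLog, prob_fst, prob_snd, prob_fst_snd]
  field_simp

lemma hellinger_sq {Ω : Type*} [Fintype Ω] (P Q : Ω → ℝ) :
    hellinger P Q ^ 2 = ∑ ω, (√(P ω) - √(Q ω)) ^ 2 / 2 := by
  rw [hellinger, sq_sqrt (by positivity), Finset.mul_sum]
  congr 1 with ω
  ring

lemma mutualInfo_bool_mul_log_two {Ω : Type*} [Fintype Ω] [DecidableEq Ω]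
    (P : Bool → Ω → ℝ) (h0 : ∑ ω, P false ω = 1) (h1 : ∑ ω, P true ω = 1) :
    mutualInfo (fun bω : Bool × Ω => (1/2) * P bω.1 bω.2) Prod.fst Prod.snd * log 2 =
      ∑ ω, (negMulLog ((P false ω + P true ω) / 2)
        - (negMulLog (P false ω) + negMulLog (P true ω)) / 2) := by
  rw [mutualInfo_fst_snd_mul_log_two]
  simp only [Fintype.sum_bool, Fintype.sum_prod_type, one_div_mul_eq_div, ← Finset.sum_div,
    h0, h1]
  simp only [negMulLog_div_two, negMulLog_one, add_comm (P true _), Finset.sum_add_distrib,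
    Finset.sum_sub_distrib, ← Finset.sum_mul, h0, h1]
  simp only [add_div, Finset.sum_add_distrib]
  ring

end InformationTheory

/-- For X uniform on two inputs and a randomized map Π,
I[X : Π(X)] ≥ h²(Π(x₁), Π(x₂)). -/
theorem mutualInfo_ge_hellinger_sq {Ω : Type*} [Fintype Ω] [DecidableEq Ω]
    (Pi : Bool → Ω → ℝ) (h0 : IsPMF (Pi false)) (h1 : IsPMF (Pi true)) :
    mutualInfo (fun bω : Bool × Ω => (1/2) * Pi bω.1 bω.2) Prod.fst Prod.snd
      ≥ hellinger (Pi false) (Pi true) ^ 2 := by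
  obtain ⟨hP0, hsum0⟩ := h0
  obtain ⟨hP1, hsum1⟩ := h1
  rw [ge_iff_le, ← mul_le_mul_iff_of_pos_right (log_pos one_lt_two),
    mutualInfo_bool_mul_log_two Pi hsum0 hsum1, hellinger_sq, Finset.sum_mul]
  gcongr with ω
  rw [mul_comm]
  exact log_two_mul_sq_sqrt_sub_sqrt_le (hP0 ω) (hP1 ω)
end

section
/- Let X take value x_0 with probability 2/3 and x_1 with probability 1/3, and let Π be a randomized map. Then I[X : Π(X)] ≥ (2/3)·h^2(Π(x_0), Π(x_1)). -/
open scoped BigOperators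

open scoped BigOperators

lemma logA {u : ℝ} (hu : 0 < u) (hu1 : u ≤ 1) : Real.log u ≤ (u-1)*(3-u)/2 := by
  have hd : ∀ x : ℝ, 0 < x →
      HasDerivAt (fun x : ℝ => (x-1)*(3-x)/2 - Real.log x) (2 - x - x⁻¹) x := by
    intro x hx0
    have h1 := (((hasDerivAt_id x).sub_const 1).mul
      ((hasDerivAt_const x 3).sub (hasDerivAt_id x))).div_const 2
    have h2 := Real.hasDerivAt_log (ne_of_gt hx0)
    have := h1.sub h2
    refine HasDerivAt.congr_deriv this ?_
    simp [id]
    ring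
  have key : AntitoneOn (fun x : ℝ => (x-1)*(3-x)/2 - Real.log x) (Set.Ioc 0 1) := by
    apply antitoneOn_of_deriv_nonpos (convex_Ioc 0 1)
    · exact ((continuousOn_id.sub continuousOn_const).mul
        (continuousOn_const.sub continuousOn_id)).div_const 2 |>.sub
        (Real.continuousOn_log.mono fun x hx => ne_of_gt hx.1)
    · intro x hx
      rw [interior_Ioc] at hx
      exact (hd x hx.1).differentiableAt.differentiableWithinAt
    · intro x hx
      rw [interior_Ioc] at hx
      rw [(hd x hx.1).deriv]
      have hxi : x * x⁻¹ = 1 := mul_inv_cancel₀ (ne_of_gt hx.1)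
      nlinarith [sq_nonneg (x-1), hx.1]
  have h1 := key ⟨hu, hu1⟩ ⟨one_pos, le_refl (1:ℝ)⟩ hu1
  simp only [Real.log_one] at h1
  linarith

lemma logB {u : ℝ} (hu1 : 1 ≤ u) : Real.log u ≤ (u - u⁻¹)/2 := by
  have hu0 : (0:ℝ) < u := lt_of_lt_of_le one_pos hu1
  have hd : ∀ x : ℝ, 0 < x →
      HasDerivAt (fun x : ℝ => (x - x⁻¹)/2 - Real.log x) ((1 - -(x^2)⁻¹)/2 - x⁻¹) x := by
    intro x hx0
    exact (((hasDerivAt_id x).sub (hasDerivAt_inv (ne_of_gt hx0))).div_const 2).sub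
      (Real.hasDerivAt_log (ne_of_gt hx0))
  have key : MonotoneOn (fun x : ℝ => (x - x⁻¹)/2 - Real.log x) (Set.Ici 1) := by
    apply monotoneOn_of_deriv_nonneg (convex_Ici 1)
    · exact ((continuousOn_id.sub (continuousOn_inv₀.mono fun x hx =>
        ne_of_gt (lt_of_lt_of_le one_pos hx))).div_const 2).sub
        (Real.continuousOn_log.mono fun x hx => ne_of_gt (lt_of_lt_of_le one_pos hx))
    · intro x hx
      rw [interior_Ici] at hx
      exact (hd x (lt_trans one_pos hx)).differentiableAt.differentiableWithinAt
    · intro x hx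
      rw [interior_Ici] at hx
      have hx0 : 0 < x := lt_trans one_pos hx
      rw [(hd x hx0).deriv]
      have hxi2 : (x^2)⁻¹ = x⁻¹ * x⁻¹ := by rw [pow_two, mul_inv]
      rw [hxi2]
      nlinarith [sq_nonneg (1 - x⁻¹)]
  have h1 := key (Set.mem_Ici.2 (le_refl (1:ℝ))) (Set.mem_Ici.2 hu1) hu1
  simp only [Real.log_one, inv_one] at h1
  norm_num at h1
  linarith

lemma core1 (s t μ : ℝ) (ht : 0 ≤ t) (htμ : t ≤ μ) (hμs : μ ≤ s) (hμ : 0 < μ)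
    (hm : 3*μ^2 = 2*s^2 + t^2) :
    2*μ*(2*s^2 - 2*s*μ + (s-μ)^2) + (t^3 - t*μ^2)
      ≥ (1733/2500) * (μ * (s-t)^2) := by
  nlinarith [sq_nonneg (s-t), sq_nonneg (s-μ), sq_nonneg (t-μ), sq_nonneg (s+t-2*μ),
    mul_nonneg ht (sq_nonneg (s-μ)), mul_nonneg hμ.le (sq_nonneg (s-t)),
    mul_nonneg (ht.trans htμ) (sq_nonneg (s-t)), sq_nonneg μ,
    mul_nonneg ht (sq_nonneg (s-t)), mul_nonneg ht (sq_nonneg (t-μ))]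

lemma core2 (s t μ : ℝ) (hs : 0 ≤ s) (hsμ : s ≤ μ) (hμt : μ ≤ t) (hμ : 0 < μ)
    (hm : 3*μ^2 = 2*s^2 + t^2) :
    2*(s^3 - s*μ^2) + μ*(2*t^2 - 2*t*μ + (t-μ)^2)
      ≥ (1733/2500) * (μ * (s-t)^2) := by
  nlinarith [sq_nonneg (s-t), sq_nonneg (s-μ), sq_nonneg (t-μ), sq_nonneg (s+t-2*μ),
    mul_nonneg hs (sq_nonneg (t-μ)), mul_nonneg hμ.le (sq_nonneg (s-t)),
    mul_nonneg hs (sq_nonneg (s-t)), mul_nonneg hs (sq_nonneg (s-μ))]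

set_option maxHeartbeats 1600000 in
lemma pointwise (a b : ℝ) (ha : 0 ≤ a) (hb : 0 ≤ b) :
    (2/3)*(a*Real.log a) + (1/3)*(b*Real.log b)
      - ((2/3)*a+(1/3)*b)*Real.log ((2/3)*a+(1/3)*b)
    ≥ (1733/7500) * (Real.sqrt a - Real.sqrt b)^2 := by
  set s := Real.sqrt a with hsdef
  set t := Real.sqrt b with htdef
  have hs2 : s^2 = a := Real.sq_sqrt ha
  have ht2 : t^2 = b := Real.sq_sqrt hb
  have hs0 : 0 ≤ s := Real.sqrt_nonneg a
  have ht0 : 0 ≤ t := Real.sqrt_nonneg b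
  set m := (2/3)*a+(1/3)*b with hmdef
  have hm0 : 0 ≤ m := by positivity
  rcases eq_or_lt_of_le hm0 with hm | hm
  · -- m = 0 so a = b = 0
    have hz : 2/3*a+1/3*b = 0 := by rw [← hmdef, ← hm]
    have ha0 : a = 0 := by linarith
    have hb0 : b = 0 := by linarith
    simp [hsdef, htdef, hmdef, ha0, hb0]
  · set μ := Real.sqrt m with hμdef
    have hμ2 : μ^2 = m := Real.sq_sqrt hm0
    have hμ : 0 < μ := Real.sqrt_pos.2 hm
    have hrel : 3*μ^2 = 2*s^2 + t^2 := by rw [hμ2, hs2, ht2]; ring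
    have hlogm : Real.log m = 2 * Real.log μ := by
      rw [← hμ2, Real.log_pow]; push_cast; ring
    have key : 3*μ*((2/3)*(a*Real.log a) + (1/3)*(b*Real.log b) - m*Real.log m)
        ≥ (1733/2500) * (μ * (s-t)^2) := by
      have hiden : 3*μ*((2/3)*(a*Real.log a) + (1/3)*(b*Real.log b) - m*Real.log m)
          = 2*μ*(a*Real.log a - a*Real.log m) + μ*(b*Real.log b - b*Real.log m) := by
        rw [hmdef]; ring
      rw [hiden]
      rcases le_total b a with hba | hab
      · -- case a ≥ b : t ≤ μ ≤ s
        have hma : m ≤ a := by rw [hmdef]; linarith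
        have hbm : b ≤ m := by rw [hmdef]; linarith
        have ha0 : 0 < a := lt_of_lt_of_le hm hma
        have hspos : 0 < s := Real.sqrt_pos.2 ha0
        have hμs : μ ≤ s := Real.sqrt_le_sqrt hma
        have htμ : t ≤ μ := Real.sqrt_le_sqrt hbm
        -- P1
        have hP1 : a*Real.log a - a*Real.log m ≥ 2*s^2 - 2*s*μ + (s-μ)^2 := by
          have hloga : Real.log a = 2 * Real.log s := by
            rw [← hs2, Real.log_pow]; push_cast; ring
          have hu : Real.log (μ/s) ≤ (μ/s-1)*(3-μ/s)/2 :=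
            logA (div_pos hμ hspos) ((div_le_one hspos).2 hμs)
          have hld : Real.log (μ/s) = Real.log μ - Real.log s :=
            Real.log_div (ne_of_gt hμ) (ne_of_gt hspos)
          have heq : a*Real.log a - a*Real.log m
              = (-2*s^2) * Real.log (μ/s) := by
            rw [hloga, hlogm, hld, ← hs2]; ring
          rw [heq]
          have h2 : (-2*s^2) * ((μ/s-1)*(3-μ/s)/2) = 2*s^2 - 2*s*μ + (s-μ)^2 := by
            field_simp
            ring
          nlinarith [mul_le_mul_of_nonneg_left hu (by positivity : (0:ℝ) ≤ 2*s^2)]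
        -- P2
        have hP2 : μ*(b*Real.log b - b*Real.log m) ≥ t^3 - t*μ^2 := by
          rcases eq_or_lt_of_le hb with hb0 | hb0
          · rw [← hb0] at ht2 ⊢
            have : t = 0 := by nlinarith
            simp [this]
          · have htpos : 0 < t := Real.sqrt_pos.2 hb0
            have hlogb : Real.log b = 2 * Real.log t := by
              rw [← ht2, Real.log_pow]; push_cast; ring
            have hu : Real.log (μ/t) ≤ (μ/t - (μ/t)⁻¹)/2 :=
              logB ((one_le_div htpos).2 htμ)
            have hinv : (μ/t)⁻¹ = t/μ := by rw [inv_div]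
            rw [hinv] at hu
            have hld : Real.log (μ/t) = Real.log μ - Real.log t :=
              Real.log_div (ne_of_gt hμ) (ne_of_gt htpos)
            have heq : μ*(b*Real.log b - b*Real.log m)
                = (-2*t^2*μ) * Real.log (μ/t) := by
              rw [hlogb, hlogm, hld, ← ht2]; ring
            rw [heq]
            have h2 : (-2*t^2*μ) * ((μ/t - t/μ)/2) = t^3 - t*μ^2 := by
              field_simp
              ring
            nlinarith [mul_le_mul_of_nonneg_left hu (by positivity : (0:ℝ) ≤ 2*t^2*μ)]
        have := core1 s t μ ht0 htμ hμs hμ hrel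
        nlinarith [mul_le_mul_of_nonneg_left hP1 (by positivity : (0:ℝ) ≤ 2*μ)]
      · -- case b ≥ a : s ≤ μ ≤ t
        have hmb : m ≤ b := by rw [hmdef]; linarith
        have ham : a ≤ m := by rw [hmdef]; linarith
        have hb0 : 0 < b := lt_of_lt_of_le hm hmb
        have htpos : 0 < t := Real.sqrt_pos.2 hb0
        have hμt : μ ≤ t := Real.sqrt_le_sqrt hmb
        have hsμ : s ≤ μ := Real.sqrt_le_sqrt ham
        have hP2 : b*Real.log b - b*Real.log m ≥ 2*t^2 - 2*t*μ + (t-μ)^2 := by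
          have hlogb : Real.log b = 2 * Real.log t := by
            rw [← ht2, Real.log_pow]; push_cast; ring
          have hu : Real.log (μ/t) ≤ (μ/t-1)*(3-μ/t)/2 :=
            logA (div_pos hμ htpos) ((div_le_one htpos).2 hμt)
          have hld : Real.log (μ/t) = Real.log μ - Real.log t :=
            Real.log_div (ne_of_gt hμ) (ne_of_gt htpos)
          have heq : b*Real.log b - b*Real.log m
              = (-2*t^2) * Real.log (μ/t) := by
            rw [hlogb, hlogm, hld, ← ht2]; ring
          rw [heq]
          have h2 : (-2*t^2) * ((μ/t-1)*(3-μ/t)/2) = 2*t^2 - 2*t*μ + (t-μ)^2 := by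
            field_simp
            ring
          nlinarith [mul_le_mul_of_nonneg_left hu (by positivity : (0:ℝ) ≤ 2*t^2)]
        have hP1 : μ*(a*Real.log a - a*Real.log m) ≥ s^3 - s*μ^2 := by
          rcases eq_or_lt_of_le ha with ha0 | ha0
          · rw [← ha0] at hs2 ⊢
            have : s = 0 := by nlinarith
            simp [this]
          · have hspos : 0 < s := Real.sqrt_pos.2 ha0
            have hloga : Real.log a = 2 * Real.log s := by
              rw [← hs2, Real.log_pow]; push_cast; ring
            have hu : Real.log (μ/s) ≤ (μ/s - (μ/s)⁻¹)/2 :=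
              logB ((one_le_div hspos).2 hsμ)
            have hinv : (μ/s)⁻¹ = s/μ := by rw [inv_div]
            rw [hinv] at hu
            have hld : Real.log (μ/s) = Real.log μ - Real.log s :=
              Real.log_div (ne_of_gt hμ) (ne_of_gt hspos)
            have heq : μ*(a*Real.log a - a*Real.log m)
                = (-2*s^2*μ) * Real.log (μ/s) := by
              rw [hloga, hlogm, hld, ← hs2]; ring
            rw [heq]
            have h2 : (-2*s^2*μ) * ((μ/s - s/μ)/2) = s^3 - s*μ^2 := by
              field_simp
              ring
            nlinarith [mul_le_mul_of_nonneg_left hu (by positivity : (0:ℝ) ≤ 2*s^2*μ)]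
        have := core2 s t μ hs0 hsμ hμt hμ hrel
        nlinarith [mul_le_mul_of_nonneg_left hP2 (by positivity : (0:ℝ) ≤ μ)]
    have h3μ : (0:ℝ) < 3*μ := by linarith
    have := (mul_le_mul_iff_right₀ h3μ).mp (by linarith [key] :
      3*μ*((1733/7500) * (s-t)^2) ≤ 3*μ*((2/3)*(a*Real.log a) + (1/3)*(b*Real.log b) - m*Real.log m))
    linarith

set_option maxHeartbeats 1600000 in
/-- For X taking value x₀ with probability 2/3 and x₁ with probability 1/3,
I[X : Π(X)] ≥ (2/3)·h²(Π(x₀), Π(x₁)).  Here x₀ is encoded as `false`. -/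
theorem mutualInfo_ge_biased_hellinger_sq {Ω : Type*} [Fintype Ω] [DecidableEq Ω]
    (Pi : Bool → Ω → ℝ) (h0 : IsPMF (Pi false)) (h1 : IsPMF (Pi true)) :
    mutualInfo (fun bω : Bool × Ω => (if bω.1 then 1/3 else 2/3) * Pi bω.1 bω.2)
        Prod.fst Prod.snd
      ≥ (2/3) * hellinger (Pi false) (Pi true) ^ 2 := by
  obtain ⟨hP0, hS0⟩ := h0
  obtain ⟨hP1, hS1⟩ := h1
  set p : Bool × Ω → ℝ := fun bω => (if bω.1 then 1/3 else 2/3) * Pi bω.1 bω.2 with hpdef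
  -- marginal probabilities
  have hpf_f : prob p Prod.fst false = 2/3 := by
    have : prob p Prod.fst false = ∑ ω : Ω, 2/3 * Pi false ω := by
      simp [prob, Fintype.sum_prod_type, Fintype.sum_bool, hpdef]
    rw [this, ← Finset.mul_sum, hS0, mul_one]
  have hpf_t : prob p Prod.fst true = 1/3 := by
    have : prob p Prod.fst true = ∑ ω : Ω, 1/3 * Pi true ω := by
      simp [prob, Fintype.sum_prod_type, Fintype.sum_bool, hpdef]
    rw [this, ← Finset.mul_sum, hS1, mul_one]
  have hps : ∀ y, prob p Prod.snd y = 2/3 * Pi false y + 1/3 * Pi true y := by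
    intro y
    simp [prob, Fintype.sum_prod_type, Fintype.sum_bool, hpdef, Finset.sum_ite_eq',
      add_comm]
  have hpp : ∀ z : Bool × Ω, prob p (fun ω' : Bool × Ω => (ω'.1, ω'.2)) z = p z := by
    intro ⟨c, y⟩
    cases c <;>
      simp [prob, Fintype.sum_prod_type, Fintype.sum_bool, Prod.mk.injEq,
        Finset.sum_ite_eq', hpdef]
  -- entropies
  have hHx : entropy p Prod.fst
      = -(1/3 * Real.logb 2 (1/3) + 2/3 * Real.logb 2 (2/3)) := by
    rw [entropy, Fintype.sum_bool, hpf_f, hpf_t]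
  have hHy : entropy p Prod.snd
      = -∑ y, (2/3 * Pi false y + 1/3 * Pi true y)
          * Real.logb 2 (2/3 * Pi false y + 1/3 * Pi true y) := by
    rw [entropy]
    congr 1
    exact Finset.sum_congr rfl fun y _ => by rw [hps y]
  have hHxy : entropy p (fun ω : Bool × Ω => (Prod.fst ω, Prod.snd ω))
      = -(∑ y, 1/3 * Pi true y * Real.logb 2 (1/3 * Pi true y)
          + ∑ y, 2/3 * Pi false y * Real.logb 2 (2/3 * Pi false y)) := by
    rw [entropy]
    congr 1
    rw [Fintype.sum_prod_type, Fintype.sum_bool]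
    congr 1 <;>
      exact Finset.sum_congr rfl fun y _ => by rw [hpp (_, y)]; simp [hpdef]
  -- split the joint-entropy logs
  have hsplit0 : ∑ y, 2/3 * Pi false y * Real.logb 2 (2/3 * Pi false y)
      = 2/3 * Real.logb 2 (2/3) + ∑ y, 2/3 * (Pi false y * Real.logb 2 (Pi false y)) := by
    have : ∀ y, 2/3 * Pi false y * Real.logb 2 (2/3 * Pi false y)
        = 2/3 * Real.logb 2 (2/3) * Pi false y
          + 2/3 * (Pi false y * Real.logb 2 (Pi false y)) := by
      intro y
      rcases eq_or_lt_of_le (hP0 y) with hz | hz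
      · simp [← hz]
      · rw [Real.logb_mul (by norm_num) (ne_of_gt hz)]; ring
    rw [Finset.sum_congr rfl fun y _ => this y, Finset.sum_add_distrib,
      ← Finset.mul_sum, hS0, mul_one]
  have hsplit1 : ∑ y, 1/3 * Pi true y * Real.logb 2 (1/3 * Pi true y)
      = 1/3 * Real.logb 2 (1/3) + ∑ y, 1/3 * (Pi true y * Real.logb 2 (Pi true y)) := by
    have : ∀ y, 1/3 * Pi true y * Real.logb 2 (1/3 * Pi true y)
        = 1/3 * Real.logb 2 (1/3) * Pi true y
          + 1/3 * (Pi true y * Real.logb 2 (Pi true y)) := by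
      intro y
      rcases eq_or_lt_of_le (hP1 y) with hz | hz
      · simp [← hz]
      · rw [Real.logb_mul (by norm_num) (ne_of_gt hz)]; ring
    rw [Finset.sum_congr rfl fun y _ => this y, Finset.sum_add_distrib,
      ← Finset.mul_sum, hS1, mul_one]
  -- mutual info as a single sum
  have hMI : mutualInfo p Prod.fst Prod.snd
      = ∑ y, (2/3 * (Pi false y * Real.logb 2 (Pi false y))
          + 1/3 * (Pi true y * Real.logb 2 (Pi true y))
          - (2/3 * Pi false y + 1/3 * Pi true y)
            * Real.logb 2 (2/3 * Pi false y + 1/3 * Pi true y)) := by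
    rw [mutualInfo, hHx, hHy, hHxy, hsplit0, hsplit1]
    rw [Finset.sum_sub_distrib, Finset.sum_add_distrib]
    ring
  rw [hMI]
  -- pointwise bound in bits
  have hlog2 : (0:ℝ) < Real.log 2 := Real.log_pos (by norm_num)
  have hpt : ∀ y, 2/3 * (Pi false y * Real.logb 2 (Pi false y))
      + 1/3 * (Pi true y * Real.logb 2 (Pi true y))
      - (2/3 * Pi false y + 1/3 * Pi true y)
        * Real.logb 2 (2/3 * Pi false y + 1/3 * Pi true y)
      ≥ 1/3 * (Real.sqrt (Pi false y) - Real.sqrt (Pi true y))^2 := by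
    intro y
    have hnat := pointwise (Pi false y) (Pi true y) (hP0 y) (hP1 y)
    set a := Pi false y
    set b := Pi true y
    set d := (Real.sqrt a - Real.sqrt b)^2 with hddef
    have hd0 : 0 ≤ d := sq_nonneg _
    have hbits : 2/3 * (a * Real.logb 2 a) + 1/3 * (b * Real.logb 2 b)
        - (2/3 * a + 1/3 * b) * Real.logb 2 (2/3 * a + 1/3 * b)
        = (2/3*(a*Real.log a) + 1/3*(b*Real.log b)
            - (2/3*a+1/3*b)*Real.log (2/3*a+1/3*b)) / Real.log 2 := by
      simp only [Real.logb]
      ring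
    rw [hbits, ge_iff_le, le_div_iff₀ hlog2]
    have hl2 : Real.log 2 < 0.6931471808 := Real.log_two_lt_d9
    nlinarith [mul_le_mul_of_nonneg_left hl2.le (show (0:ℝ) ≤ d/3 by linarith)]
  -- sum up
  have hsum : ∑ y, (2/3 * (Pi false y * Real.logb 2 (Pi false y))
      + 1/3 * (Pi true y * Real.logb 2 (Pi true y))
      - (2/3 * Pi false y + 1/3 * Pi true y)
        * Real.logb 2 (2/3 * Pi false y + 1/3 * Pi true y))
      ≥ ∑ y, 1/3 * (Real.sqrt (Pi false y) - Real.sqrt (Pi true y))^2 :=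
    Finset.sum_le_sum fun y _ => hpt y
  have hhel : (2/3) * hellinger (Pi false) (Pi true) ^ 2
      = ∑ y, 1/3 * (Real.sqrt (Pi false y) - Real.sqrt (Pi true y))^2 := by
    rw [hellinger, Real.sq_sqrt (by positivity), ← Finset.mul_sum]
    ring
  rw [hhel]
  exact hsum
end
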